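/- Let X be an atomic order continuous Banach lattice. Then a net x_α un-converges to x if and only if f_a(x_α) → f_a(x) for every atom a, where f_a is the coordinate functional associated with the atom a. -/

import Mathlib

/-!
For an atom `a` with coordinate functional `φ` one has `|y| ⊓ t • a = min |φ y| t • a`; with
`t = 1` this turns un-convergence tested against `a` into convergence of `φ`. Conversely, for
`u ≥ 0` the remainders `r F = (u - ∑ a ∈ F, f a u • a)⁺` decrease to `0` along finite sets `F` of
atoms, so by order continuity some `‖r F‖` is small, and the Riesz inequality
`x ⊓ (y + z) ≤ x ⊓ y + x ⊓ z` gives `‖|y| ⊓ u‖ ≤ ∑ a ∈ F, |f a y| * ‖a‖ + ‖r F‖`.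
-/

open Filter Topology

/-- A net `f` un-converges to `x` if `‖|f i - x| ⊓ u‖ → 0` for every `u ≥ 0`. -/
def UnTendsto {ι X : Type*} [NormedAddCommGroup X] [Lattice X] [HasSolidNorm X] [IsOrderedAddMonoid X]
    (f : ι → X) (l : Filter ι) (x : X) : Prop :=
  ∀ u : X, 0 ≤ u → Tendsto (fun i => ‖|f i - x| ⊓ u‖) l (𝓝 0)

/-- `a` is an atom of a vector lattice: `a > 0` and the principal ideal
generated by `a` is `span {a}` (every `0 ≤ x ≤ a` is a scalar multiple of `a`). -/
def IsAtomElem {X : Type*} [Lattice X] [AddCommGroup X] [Module ℝ X] (a : X) : Prop :=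
  0 < a ∧ ∀ x : X, 0 ≤ x → x ≤ a → ∃ c : ℝ, x = c • a

universe u

section LatticeOrderedGroup

variable {X : Type*} [Lattice X] [AddCommGroup X] [IsOrderedAddMonoid X]

lemma inf_add_le_inf_add_inf {x y z : X} (hx : 0 ≤ x) (hy : 0 ≤ y) (hz : 0 ≤ z) :
    x ⊓ (y + z) ≤ x ⊓ y + x ⊓ z := by
  rw [inf_add, add_inf, add_inf]
  refine le_inf (le_inf ?_ ?_) (le_inf ?_ inf_le_right)
  · exact inf_le_left.trans (le_add_of_nonneg_right hx)
  · exact inf_le_left.trans (le_add_of_nonneg_right hz)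
  · exact inf_le_left.trans (le_add_of_nonneg_left hy)

lemma inf_sum_le_sum_inf {ι : Type*} (s : Finset ι) {x : X} (hx : 0 ≤ x) {w : ι → X}
    (hw : ∀ i ∈ s, 0 ≤ w i) : x ⊓ ∑ i ∈ s, w i ≤ ∑ i ∈ s, x ⊓ w i := by
  classical
  induction s using Finset.induction_on with
  | empty => simp [inf_of_le_right hx]
  | insert i s hi ih =>
    rw [Finset.sum_insert hi, Finset.sum_insert hi]
    have hs : ∀ j ∈ s, 0 ≤ w j := fun j hj => hw j (Finset.mem_insert_of_mem hj)
    calc x ⊓ (w i + ∑ j ∈ s, w j) ≤ x ⊓ w i + x ⊓ ∑ j ∈ s, w j :=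
          inf_add_le_inf_add_inf hx (hw i (Finset.mem_insert_self i s)) (Finset.sum_nonneg hs)
      _ ≤ x ⊓ w i + ∑ j ∈ s, x ⊓ w j := add_le_add_right (ih hs) _

lemma inf_nsmul_eq_zero {d a : X} (hd : 0 ≤ d) (ha : 0 ≤ a) (h : d ⊓ a = 0) (n : ℕ) :
    d ⊓ n • a = 0 := by
  refine le_antisymm ?_ (le_inf hd (nsmul_nonneg ha n))
  simpa [h] using inf_sum_le_sum_inf (Finset.range n) hd (w := fun _ => a) (by simp [ha])

lemma nonneg_of_nsmul_nonneg {a : X} {n : ℕ} (hn : n ≠ 0) (h : 0 ≤ n • a) : 0 ≤ a := by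
  have hdisj : a⁻ ⊓ n • a⁺ = 0 :=
    inf_nsmul_eq_zero (negPart_nonneg a) (posPart_nonneg a)
      (by rw [inf_comm]; exact posPart_inf_negPart_eq_zero a) n
  have hle : n • a⁻ ≤ n • a⁺ := by
    rwa [← sub_nonneg, ← nsmul_sub, posPart_sub_negPart]
  have hneg : a⁻ ≤ 0 := hdisj ▸ le_inf le_rfl ((le_self_nsmul (negPart_nonneg a) hn).trans hle)
  exact negPart_eq_zero.1 (le_antisymm hneg (negPart_nonneg a))

end LatticeOrderedGroup

section NormedLattice

variable {X : Type*} [NormedAddCommGroup X] [Lattice X] [HasSolidNorm X] [IsOrderedAddMonoid X]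
  [NormedSpace ℝ X]

/- Order and real scalars interact here only through the norm: positivity of `c • x` comes from
`n • y ≥ 0 → y ≥ 0` at `c ≈ ⌊c * n⌋₊ / n` and the closedness of the positive cone. -/
lemma HasSolidNorm.smul_nonneg {c : ℝ} (hc : 0 ≤ c) {x : X} (hx : 0 ≤ x) : 0 ≤ c • x := by
  have hlim : Tendsto (fun n : ℕ => (⌊c * n⌋₊ / n : ℝ) • x) atTop (𝓝 (c • x)) :=
    ((tendsto_nat_floor_mul_div_atTop hc).comp tendsto_natCast_atTop_atTop).smul_const x
  refine ge_of_tendsto hlim ((eventually_ne_atTop 0).mono fun n hn => ?_)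
  refine nonneg_of_nsmul_nonneg hn ?_
  rw [← Nat.cast_smul_eq_nsmul ℝ, smul_smul, mul_div_cancel₀ _ (Nat.cast_ne_zero.2 hn),
    Nat.cast_smul_eq_nsmul]
  exact nsmul_nonneg hx _

instance HasSolidNorm.isOrderedModule : IsOrderedModule ℝ X :=
  .of_smul_nonneg fun _ hc _ hx => HasSolidNorm.smul_nonneg hc hx

end NormedLattice

section Coordinate

variable {X : Type*} [Lattice X] [AddCommGroup X] [IsOrderedAddMonoid X] [Module ℝ X]
  [IsOrderedModule ℝ X]

lemma inf_smul_eq_zero {d a : X} (hd : 0 ≤ d) (ha : 0 ≤ a) (h : d ⊓ a = 0) {s : ℝ} (hs : 0 ≤ s) :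
    d ⊓ s • a = 0 := by
  obtain ⟨n, hn⟩ := exists_nat_ge s
  refine le_antisymm ?_ (le_inf hd (smul_nonneg hs ha))
  calc d ⊓ s • a ≤ d ⊓ n • a := by
        rw [← Nat.cast_smul_eq_nsmul ℝ]
        exact inf_le_inf_left d (smul_le_smul_of_nonneg_right hn ha)
    _ = 0 := inf_nsmul_eq_zero hd ha h n

lemma min_smul_of_nonneg {a : X} (ha : 0 ≤ a) (s t : ℝ) : min s t • a = s • a ⊓ t • a := by
  rcases le_total s t with h | h
  · rw [min_eq_left h, inf_eq_left.2 (smul_le_smul_of_nonneg_right h ha)]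
  · rw [min_eq_right h, inf_eq_right.2 (smul_le_smul_of_nonneg_right h ha)]

def IsCoordinateFunctional (a : X) (φ : X →ₗ[ℝ] ℝ) : Prop :=
  ∀ x : X, 0 ≤ x → 0 ≤ φ x ∧ |x - φ x • a| ⊓ a = 0

namespace IsCoordinateFunctional

variable {a : X} {φ : X →ₗ[ℝ] ℝ}

lemma smul_le (hφ : IsCoordinateFunctional a φ) (ha : 0 ≤ a) {z : X} (hz : 0 ≤ z) :
    φ z • a ≤ z := by
  obtain ⟨hc, hdisj⟩ := hφ z hz
  have hzero : |z - φ z • a| ⊓ φ z • a = 0 := inf_smul_eq_zero (abs_nonneg _) ha hdisj hc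
  have hneg : (z - φ z • a)⁻ ≤ |z - φ z • a| ⊓ φ z • a :=
    sup_le (le_inf (neg_le_abs _) (by rw [neg_sub]; exact sub_le_self _ hz))
      (le_inf (abs_nonneg _) (smul_nonneg hc ha))
  rw [← sub_nonneg, ← negPart_eq_zero]
  exact le_antisymm (hzero ▸ hneg) (negPart_nonneg _)

lemma inf_smul_of_nonneg (hφ : IsCoordinateFunctional a φ) (ha : 0 ≤ a) {z : X} (hz : 0 ≤ z)
    {t : ℝ} (ht : 0 ≤ t) : z ⊓ t • a = min (φ z) t • a := by
  obtain ⟨hc, hdisj⟩ := hφ z hz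
  have hd : 0 ≤ z - φ z • a := sub_nonneg.2 (hφ.smul_le ha hz)
  rw [abs_of_nonneg hd] at hdisj
  refine le_antisymm ?_ (le_inf ?_ (smul_le_smul_of_nonneg_right (min_le_right _ _) ha))
  · calc z ⊓ t • a = t • a ⊓ (φ z • a + (z - φ z • a)) := by rw [inf_comm, add_sub_cancel]
      _ ≤ t • a ⊓ φ z • a + t • a ⊓ (z - φ z • a) :=
          inf_add_le_inf_add_inf (smul_nonneg ht ha) (smul_nonneg hc ha) hd
      _ = min (φ z) t • a := by
          rw [inf_comm (t • a) (z - _), inf_smul_eq_zero hd ha hdisj ht, add_zero, inf_comm,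
            min_smul_of_nonneg ha]
  · exact (smul_le_smul_of_nonneg_right (min_le_left _ _) ha).trans (hφ.smul_le ha hz)

lemma abs_apply (hφ : IsCoordinateFunctional a φ) (ha : 0 < a) (y : X) : |φ y| = φ |y| := by
  have hmin : min (φ y⁺) (φ y⁻) = 0 := by
    have hle : min (φ y⁺) (φ y⁻) • a ≤ y⁺ ⊓ y⁻ :=
      le_inf ((smul_le_smul_of_nonneg_right (min_le_left _ _) ha.le).trans
          (hφ.smul_le ha.le (posPart_nonneg y)))
        ((smul_le_smul_of_nonneg_right (min_le_right _ _) ha.le).trans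
          (hφ.smul_le ha.le (negPart_nonneg y)))
    rw [posPart_inf_negPart_eq_zero] at hle
    have hnonneg : 0 ≤ min (φ y⁺) (φ y⁻) • a :=
      smul_nonneg (le_min (hφ y⁺ (posPart_nonneg y)).1 (hφ y⁻ (negPart_nonneg y)).1) ha.le
    exact (smul_eq_zero.1 (le_antisymm hle hnonneg)).resolve_right ha.ne'
  have h2 := two_nsmul_inf_eq_add_sub_abs_sub (φ y⁺) (φ y⁻)
  rw [hmin, smul_zero, eq_comm, sub_eq_zero, abs_sub_comm] at h2
  rw [← posPart_add_negPart y, map_add, h2]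
  conv_lhs => rw [← posPart_sub_negPart y]
  rw [map_sub]

lemma abs_inf_smul (hφ : IsCoordinateFunctional a φ) (ha : 0 < a) (y : X) {t : ℝ} (ht : 0 ≤ t) :
    |y| ⊓ t • a = min |φ y| t • a := by
  rw [hφ.inf_smul_of_nonneg ha.le (abs_nonneg y) ht, hφ.abs_apply ha]

end IsCoordinateFunctional

/- The positive part matters: distinct elements of `S`, such as `a` and `2 • a`, may span the same
band, so the sum can exceed `u`. -/
def coordRemainder (S : Set X) (f : X → X →ₗ[ℝ] ℝ) (u : X) (F : Finset S) : X :=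
  (u - ∑ a ∈ F, f a u • (a : X))⁺

variable {S : Set X} {f : X → X →ₗ[ℝ] ℝ}

lemma antitone_coordRemainder (hS : ∀ a ∈ S, 0 ≤ a)
    (hf : ∀ a ∈ S, IsCoordinateFunctional a (f a)) {u : X} (hu : 0 ≤ u) :
    Antitone (coordRemainder S f u) := fun _ _ hFG =>
  posPart_mono (sub_le_sub_left (Finset.sum_le_sum_of_subset_of_nonneg hFG fun a _ _ =>
    smul_nonneg ((hf a a.2) u hu).1 (hS a a.2)) u)

lemma isGLB_range_coordRemainder (hS : ∀ a ∈ S, 0 ≤ a)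
    (hf : ∀ a ∈ S, IsCoordinateFunctional a (f a)) {u : X} (hu : 0 ≤ u)
    (hsup : IsLUB ((fun a => f a u • a) '' S) u) :
    IsGLB (Set.range (coordRemainder S f u)) 0 := by
  refine ⟨?_, fun b hb => ?_⟩
  · rintro _ ⟨F, rfl⟩
    exact posPart_nonneg _
  · have hub : u - b ∈ upperBounds ((fun a => f a u • a) '' S) := by
      rintro _ ⟨a, haS, rfl⟩
      have hb' : b ≤ (u - f a u • a)⁺ := by simpa [coordRemainder] using hb ⟨{⟨a, haS⟩}, rfl⟩
      rw [posPart_of_nonneg (sub_nonneg.2 ((hf a haS).smul_le (hS a haS) hu))] at hb'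
      exact le_sub_comm.1 hb'
    simpa using le_sub_comm.1 (hsup.2 hub)

lemma abs_inf_le_sum_add_coordRemainder (hS : ∀ a ∈ S, 0 < a)
    (hf : ∀ a ∈ S, IsCoordinateFunctional a (f a)) {u : X} (hu : 0 ≤ u) (F : Finset S) (y : X) :
    |y| ⊓ u ≤ ∑ a ∈ F, |f a y| • (a : X) + coordRemainder S f u F := by
  have hterm : ∀ a ∈ F, 0 ≤ f a u • (a : X) := fun a _ =>
    smul_nonneg ((hf a a.2) u hu).1 (hS a a.2).le
  calc |y| ⊓ u ≤ |y| ⊓ (∑ a ∈ F, f a u • (a : X) + coordRemainder S f u F) :=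
        inf_le_inf_left _ (by rw [← sub_le_iff_le_add']; exact le_posPart _)
    _ ≤ |y| ⊓ ∑ a ∈ F, f a u • (a : X) + |y| ⊓ coordRemainder S f u F :=
        inf_add_le_inf_add_inf (abs_nonneg y) (Finset.sum_nonneg hterm) (posPart_nonneg _)
    _ ≤ ∑ a ∈ F, |y| ⊓ f a u • (a : X) + coordRemainder S f u F :=
        add_le_add (inf_sum_le_sum_inf F (abs_nonneg y) hterm) inf_le_right
    _ ≤ ∑ a ∈ F, |f a y| • (a : X) + coordRemainder S f u F := by
        gcongr with a
        rw [(hf a a.2).abs_inf_smul (hS a a.2) y ((hf a a.2) u hu).1]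
        exact smul_le_smul_of_nonneg_right (min_le_left _ _) (hS a a.2).le

end Coordinate

def HasOrderContinuousNorm (X : Type u) [NormedAddCommGroup X] [Lattice X] : Prop :=
  ∀ (κ : Type u) [SemilatticeSup κ] [Nonempty κ] (g : κ → X),
    Antitone g → IsGLB (Set.range g) 0 → Tendsto (fun i => ‖g i‖) atTop (𝓝 0)

section Convergence

variable {X : Type u} [NormedAddCommGroup X] [Lattice X] [HasSolidNorm X] [IsOrderedAddMonoid X]
  [NormedSpace ℝ X]

lemma IsCoordinateFunctional.tendsto_of_unTendsto {a : X} {φ : X →ₗ[ℝ] ℝ}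
    (hφ : IsCoordinateFunctional a φ) (ha : 0 < a) {ι : Type*} {l : Filter ι} {g : ι → X} {x : X}
    (h : UnTendsto g l x) : Tendsto (fun i => φ (g i)) l (𝓝 (φ x)) := by
  have hnorm : ∀ i, ‖|g i - x| ⊓ a‖ / ‖a‖ = min |φ (g i) - φ x| 1 := fun i => by
    have hinf := hφ.abs_inf_smul ha (g i - x) zero_le_one
    rw [one_smul] at hinf
    rw [hinf, norm_smul, Real.norm_of_nonneg (le_min (abs_nonneg _) zero_le_one), map_sub,
      mul_div_cancel_right₀ _ (norm_ne_zero_iff.2 ha.ne')]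
  have hmin : Tendsto (fun i => min |φ (g i) - φ x| 1) l (𝓝 0) := by
    simpa [hnorm] using (h a ha.le).div_const ‖a‖
  have habs : Tendsto (fun i => |φ (g i) - φ x|) l (𝓝 0) :=
    hmin.congr' ((hmin.eventually (gt_mem_nhds one_pos)).mono fun i hi =>
      min_eq_left (le_of_not_ge fun h1 => hi.ne (min_eq_right h1)))
  exact tendsto_iff_norm_sub_tendsto_zero.2 habs

variable {S : Set X} {f : X → X →ₗ[ℝ] ℝ}

lemma norm_abs_inf_le_sum_add_norm_coordRemainder (hS : ∀ a ∈ S, 0 < a)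
    (hf : ∀ a ∈ S, IsCoordinateFunctional a (f a)) {u : X} (hu : 0 ≤ u) (F : Finset S) (y : X) :
    ‖|y| ⊓ u‖ ≤ ∑ a ∈ F, |f a y| * ‖(a : X)‖ + ‖coordRemainder S f u F‖ :=
  calc ‖|y| ⊓ u‖ ≤ ‖∑ a ∈ F, |f a y| • (a : X) + coordRemainder S f u F‖ :=
        norm_le_norm_of_abs_le_abs (abs_le_abs_of_nonneg (le_inf (abs_nonneg y) hu)
          (abs_inf_le_sum_add_coordRemainder hS hf hu F y))
    _ ≤ ‖∑ a ∈ F, |f a y| • (a : X)‖ + ‖coordRemainder S f u F‖ := norm_add_le _ _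
    _ ≤ ∑ a ∈ F, |f a y| * ‖(a : X)‖ + ‖coordRemainder S f u F‖ := by
        gcongr
        refine (norm_sum_le _ _).trans (le_of_eq (Finset.sum_congr rfl fun a _ => ?_))
        rw [norm_smul, Real.norm_eq_abs, abs_abs]

lemma unTendsto_of_forall_tendsto (hoc : HasOrderContinuousNorm X) (hS : ∀ a ∈ S, 0 < a)
    (hf : ∀ a ∈ S, IsCoordinateFunctional a (f a))
    (hsup : ∀ u : X, 0 ≤ u → IsLUB ((fun a => f a u • a) '' S) u)
    {ι : Type*} {l : Filter ι} {g : ι → X} {x : X}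
    (h : ∀ a ∈ S, Tendsto (fun i => f a (g i)) l (𝓝 (f a x))) : UnTendsto g l x := by
  classical
  intro u hu
  rw [Metric.tendsto_nhds]
  intro ε hε
  have hS' : ∀ a ∈ S, 0 ≤ a := fun a ha => (hS a ha).le
  obtain ⟨F, hF⟩ := ((hoc (Finset S) _ (antitone_coordRemainder hS' hf hu)
    (isGLB_range_coordRemainder hS' hf hu (hsup u hu))).eventually
      (gt_mem_nhds (half_pos hε))).exists
  have hsum : Tendsto (fun i => ∑ a ∈ F, |f a (g i - x)| * ‖(a : X)‖) l (𝓝 0) := by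
    simpa using tendsto_finsetSum F fun a _ =>
      ((tendsto_iff_norm_sub_tendsto_zero.1 (h a a.2)).mul_const ‖(a : X)‖)
  filter_upwards [hsum.eventually (gt_mem_nhds (half_pos hε))] with i hi
  rw [dist_zero_right, norm_norm]
  calc ‖|g i - x| ⊓ u‖ ≤ _ :=
        norm_abs_inf_le_sum_add_norm_coordRemainder hS hf hu F (g i - x)
    _ < ε / 2 + ε / 2 := add_lt_add hi hF
    _ = ε := add_halves ε

end Convergence

theorem unTendsto_iff_coordinatewise_of_atomic_general
    {X : Type u} [NormedAddCommGroup X] [Lattice X] [HasSolidNorm X] [IsOrderedAddMonoid X] [NormedSpace ℝ X]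
    (hoc : ∀ (κ : Type u) [SemilatticeSup κ] [Nonempty κ] (g : κ → X),
      Antitone g → IsGLB (Set.range g) 0 → Tendsto (fun i => ‖g i‖) atTop (𝓝 0))
    (f : X → X →ₗ[ℝ] ℝ)
    (hf : ∀ a : X, IsAtomElem a → ∀ x : X, 0 ≤ x →
      0 ≤ f a x ∧ |x - f a x • a| ⊓ a = 0)
    (hatomic : ∀ x : X, 0 ≤ x →
      IsLUB ((fun a => f a x • a) '' {a : X | IsAtomElem a}) x)
    {ι : Type*} (l : Filter ι) (g : ι → X) (x : X) :
    UnTendsto g l x ↔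
      ∀ a : X, IsAtomElem a → Tendsto (fun i => f a (g i)) l (𝓝 (f a x)) :=
  ⟨fun h a ha => IsCoordinateFunctional.tendsto_of_unTendsto (hf a ha) ha.1 h,
    unTendsto_of_forall_tendsto hoc (fun _ ha => ha.1) hf hatomic⟩

/-- In an atomic order continuous Banach lattice, un-convergence is exactly
coordinate-wise convergence: `x_α →un x` iff `f_a (x_α) → f_a x` for every atom
`a`, where `f_a` is the coordinate functional associated with `a` (so that
`P_a y = f_a (y) • a` is the band projection onto the band generated by `a`). -/
theorem unTendsto_iff_coordinatewise_of_atomic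
    {X : Type u} [NormedAddCommGroup X] [Lattice X] [HasSolidNorm X] [IsOrderedAddMonoid X] [NormedSpace ℝ X] [CompleteSpace X]
    (hoc : ∀ (κ : Type u) [SemilatticeSup κ] [Nonempty κ] (g : κ → X),
      Antitone g → IsGLB (Set.range g) 0 → Tendsto (fun i => ‖g i‖) atTop (𝓝 0))
    (f : X → X →ₗ[ℝ] ℝ)
    (hf : ∀ a : X, IsAtomElem a → ∀ x : X, 0 ≤ x →
      0 ≤ f a x ∧ |x - f a x • a| ⊓ a = 0)
    (hatomic : ∀ x : X, 0 ≤ x →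
      IsLUB ((fun a => f a x • a) '' {a : X | IsAtomElem a}) x)
    {ι : Type*} (l : Filter ι) (g : ι → X) (x : X) :
    UnTendsto g l x ↔
      ∀ a : X, IsAtomElem a → Tendsto (fun i => f a (g i)) l (𝓝 (f a x)) :=
  unTendsto_iff_coordinatewise_of_atomic_general hoc f hf hatomic l g x
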